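/- Let A and B be finite nonempty sets of points in ℝ², and let p ∈ A and q ∈ B. Then h(A ∪ B) ≤ h(A) + h(B) + 2‖p − q‖. -/

import Mathlib

/-!
The support function of `A ∪ B` is the maximum of those of `A` and `B`, and
`max x y ≤ x + y - min a b` whenever `a ≤ x` and `b ≤ y`. Take for `a`, `b` the projections of `p`
and `q` on the direction `u_θ = (cos θ, sin θ)` and integrate over a period: each projection
integrates to `0`, and `∫ |⟪p - q, u_θ⟫| dθ = 4 ‖p - q‖` (a rotated copy of `∫ |cos| = 4`), so the
`min` term contributes exactly `2 ‖p - q‖`.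
-/

noncomputable section

open Real intervalIntegral

/-- The Euclidean plane. -/
abbrev Plane := EuclideanSpace ℝ (Fin 2)

/-- Perimeter of a bounded set via Cauchy's formula. -/
noncomputable def perim (C : Set Plane) : ℝ :=
  ∫ θ in (0:ℝ)..(2 * Real.pi),
    sSup ((fun p : Plane => p 0 * Real.cos θ + p 1 * Real.sin θ) '' C)

theorem integral_abs_cos_sub (φ : ℝ) : ∫ θ in (0:ℝ)..2 * π, |cos (θ - φ)| = 4 := by
  have hper : Function.Periodic (fun x => |cos x|) π := fun x => by simp [cos_add_pi]
  have hint : ∀ a b : ℝ, IntervalIntegrable (fun x => |cos x|) MeasureTheory.volume a b :=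
    fun a b => continuous_cos.abs.intervalIntegrable a b
  have hhalf : ∫ x in -(π / 2)..-(π / 2) + π, |cos x| = 2 := by
    rw [show -(π / 2) + π = π / 2 by ring,
      integral_congr fun x hx => abs_of_nonneg (cos_nonneg_of_mem_Icc (by
        rwa [Set.uIcc_of_le (by linarith [pi_pos])] at hx)), integral_cos]
    norm_num
  calc ∫ θ in (0:ℝ)..2 * π, |cos (θ - φ)|
      = ∫ x in -φ..-φ + (2:ℤ) • π, |cos x| := by
        rw [integral_comp_sub_right (fun x => |cos x|)]; congr 1 <;> simp; ring
    _ = 4 := by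
        rw [hper.intervalIntegral_add_zsmul_eq 2 _ hint, hper.intervalIntegral_add_eq _ (-(π / 2)),
          hhalf]; norm_num

theorem integral_abs_mul_cos_add_mul_sin (a b : ℝ) :
    ∫ θ in (0:ℝ)..2 * π, |a * cos θ + b * sin θ| = 4 * √(a ^ 2 + b ^ 2) := by
  set z : ℂ := ⟨a, b⟩
  have hpolar : ∀ θ, |a * cos θ + b * sin θ| = ‖z‖ * |cos (θ - z.arg)| := fun θ => by
    rw [cos_sub, ← abs_of_nonneg (norm_nonneg z), ← abs_mul]
    congr 1
    have ha : ‖z‖ * cos z.arg = a := Complex.norm_mul_cos_arg z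
    have hb : ‖z‖ * sin z.arg = b := Complex.norm_mul_sin_arg z
    rw [← ha, ← hb]
    ring
  rw [integral_congr fun θ _ => hpolar θ, integral_const_mul, integral_abs_cos_sub,
    Complex.norm_eq_sqrt_sq_add_sq]
  ring

def dirProj (θ : ℝ) (p : Plane) : ℝ := p 0 * cos θ + p 1 * sin θ

def supportFun (C : Set Plane) (θ : ℝ) : ℝ := sSup (dirProj θ '' C)

theorem perim_eq_integral_supportFun (C : Set Plane) :
    perim C = ∫ θ in (0:ℝ)..2 * π, supportFun C θ := rfl

theorem continuous_dirProj (p : Plane) : Continuous fun θ => dirProj θ p := by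
  unfold dirProj; fun_prop

theorem dirProj_sub (θ : ℝ) (p q : Plane) : dirProj θ (p - q) = dirProj θ p - dirProj θ q := by
  simp only [dirProj, PiLp.sub_apply]; ring

theorem integral_dirProj (p : Plane) : ∫ θ in (0:ℝ)..2 * π, dirProj θ p = 0 := by
  unfold dirProj
  rw [integral_add (f := fun θ => p 0 * cos θ) (g := fun θ => p 1 * sin θ)
    ((continuous_const.mul continuous_cos).intervalIntegrable _ _)
    ((continuous_const.mul continuous_sin).intervalIntegrable _ _),
    integral_const_mul, integral_const_mul, integral_cos, integral_sin]
  simp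

theorem integral_abs_dirProj (v : Plane) : ∫ θ in (0:ℝ)..2 * π, |dirProj θ v| = 4 * ‖v‖ := by
  rw [EuclideanSpace.norm_eq, Fin.sum_univ_two]
  simp only [Real.norm_eq_abs, sq_abs]
  exact integral_abs_mul_cos_add_mul_sin (v 0) (v 1)

theorem dirProj_le_supportFun {C : Set Plane} (hC : C.Finite) {p : Plane} (hp : p ∈ C) (θ : ℝ) :
    dirProj θ p ≤ supportFun C θ :=
  le_csSup ((hC.image _).bddAbove) (Set.mem_image_of_mem _ hp)

theorem continuous_supportFun {C : Set Plane} (hC : C.Finite) (hne : C.Nonempty) :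
    Continuous (supportFun C) := by
  have hne' : hC.toFinset.Nonempty := by simpa using hne
  have hsup : supportFun C = fun θ => hC.toFinset.sup' hne' (dirProj θ) := by
    ext θ
    rw [Finset.sup'_eq_csSup_image, Set.Finite.coe_toFinset, supportFun]
  rw [hsup]
  exact Continuous.finset_sup'_apply hne' fun p _ => continuous_dirProj p

theorem supportFun_union {A B : Set Plane} (hA : A.Finite) (hAne : A.Nonempty)
    (hB : B.Finite) (hBne : B.Nonempty) (θ : ℝ) :
    supportFun (A ∪ B) θ = max (supportFun A θ) (supportFun B θ) := by
  rw [supportFun, Set.image_union]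
  exact csSup_union (hA.image _).bddAbove (hAne.image _) (hB.image _).bddAbove (hBne.image _)

/-- This is `max x y ≤ x + y - min a b` with `min a b = (a + b - |a - b|) / 2` expanded, so that
each term can be integrated separately. -/
theorem max_le_add_sub_add_abs_sub {a b x y : ℝ} (ha : a ≤ x) (hb : b ≤ y) :
    max x y ≤ x + y - (a + b) / 2 + |a - b| / 2 := by
  have := le_abs_self (a - b)
  have := neg_abs_le (a - b)
  apply max_le <;> linarith

theorem supportFun_union_le {A B : Set Plane} (hA : A.Finite) (hAne : A.Nonempty)
    (hB : B.Finite) (hBne : B.Nonempty) {p q : Plane} (hp : p ∈ A) (hq : q ∈ B) (θ : ℝ) :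
    supportFun (A ∪ B) θ ≤ supportFun A θ + supportFun B θ
      - (dirProj θ p + dirProj θ q) / 2 + |dirProj θ (p - q)| / 2 := by
  rw [supportFun_union hA hAne hB hBne, dirProj_sub]
  exact max_le_add_sub_add_abs_sub (dirProj_le_supportFun hA hp θ) (dirProj_le_supportFun hB hq θ)

/-- bridging inequality: merging two finite sets costs at most twice
the distance between a point of each. -/
theorem perim_union_le_add_bridge
    (A B : Set Plane) (hA : A.Finite) (hAne : A.Nonempty)
    (hB : B.Finite) (hBne : B.Nonempty)
    (p q : Plane) (hp : p ∈ A) (hq : q ∈ B) :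
    perim (A ∪ B) ≤ perim A + perim B + 2 * dist p q := by
  have cU := continuous_supportFun (hA.union hB) (hAne.mono Set.subset_union_left)
  have cA := continuous_supportFun hA hAne
  have cB := continuous_supportFun hB hBne
  have cp := continuous_dirProj p
  have cq := continuous_dirProj q
  have cpq := (continuous_dirProj (p - q)).abs
  simp only [perim_eq_integral_supportFun]
  calc ∫ θ in (0:ℝ)..2 * π, supportFun (A ∪ B) θ
      ≤ ∫ θ in (0:ℝ)..2 * π, (supportFun A θ + supportFun B θ
          - (dirProj θ p + dirProj θ q) / 2 + |dirProj θ (p - q)| / 2) :=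
        integral_mono_on (by positivity)
          (cU.intervalIntegrable _ _)
          ((by fun_prop : Continuous _).intervalIntegrable _ _)
          fun θ _ => supportFun_union_le hA hAne hB hBne hp hq θ
    _ = _ := by
        rw [integral_add, integral_sub, integral_add, integral_div, integral_add, integral_div,
          integral_dirProj, integral_dirProj, integral_abs_dirProj, dist_eq_norm]
        · ring
        all_goals exact (by fun_prop : Continuous _).intervalIntegrable _ _

end
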